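/- arXiv:2604.01040 — 2 statements merged into one kernel-verified Lean document; each statement's English description precedes it below -/
import Mathlib

section
/- Let G be a finite simple graph with vertex set S and edge set E. For F ⊆ E, let o(F) denote the number of vertices of S having odd degree in the graph (S, F), and define the cost of F as |F| + (|S| − o(F)). Then the minimum of the cost over all subsets F ⊆ E equals |S| − ν(G), where ν(G) is the matching number of G. -/
/-!
A matching `M` costs `|M| + (|V| - 2|M|) = |V| - |M|`, which gives the upper bound `|V| - ν(G)`.
Conversely, for any `F ⊆ E` take a maximum matching `M ⊆ F`. Every edge of `F` meets a vertex
covered by `M`, so each vertex covered by `F` but not by `M` can be charged to an edge of `F \ M`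
containing it, and no edge is charged twice. Hence odd-degree vertices, which are all covered by
`F`, number at most `2|M| + |F \ M| = |F| + |M| ≤ |F| + ν(G)`.
-/

/-- `M` is a matching of the simple graph `G`: a finite set of edges of `G`,
no two of which share a vertex. -/
def IsMatchingIn {V : Type*} (G : SimpleGraph V) (M : Finset (Sym2 V)) : Prop :=
  ↑M ⊆ G.edgeSet ∧ ∀ e ∈ M, ∀ f ∈ M, e ≠ f → ∀ v : V, ¬(v ∈ e ∧ v ∈ f)

/-- The matching number `ν(G)`: the maximum size of a matching of `G`. -/
noncomputable def matchingNumber {V : Type*} (G : SimpleGraph V) : ℕ :=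
  sSup {n : ℕ | ∃ M : Finset (Sym2 V), IsMatchingIn G M ∧ M.card = n}

/-- `oddCount F` is the number of vertices having odd degree in the graph with edge set `F`,
where the degree of `v` is the number of edges of `F` incident to `v`. -/
def oddCount {V : Type*} [Fintype V] [DecidableEq V] (F : Finset (Sym2 V)) : ℕ :=
  (Finset.univ.filter fun v : V => (F.filter fun e => v ∈ e).card % 2 = 1).card

open Finset

section
variable {V : Type*} [Fintype V]

lemma bddAbove_matchingSizes (G : SimpleGraph V) :
    BddAbove {n : ℕ | ∃ M : Finset (Sym2 V), IsMatchingIn G M ∧ #M = n} :=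
  ⟨Fintype.card (Sym2 V), by rintro n ⟨M, -, rfl⟩; exact card_le_univ M⟩

lemma IsMatchingIn.card_le_matchingNumber {G : SimpleGraph V} {M : Finset (Sym2 V)}
    (hM : IsMatchingIn G M) : #M ≤ matchingNumber G :=
  le_csSup (bddAbove_matchingSizes G) ⟨M, hM, rfl⟩

lemma exists_isMatchingIn_card_eq_matchingNumber (G : SimpleGraph V) :
    ∃ M : Finset (Sym2 V), IsMatchingIn G M ∧ #M = matchingNumber G := by
  refine Nat.sSup_mem ?_ (bddAbove_matchingSizes G)
  exact ⟨0, ∅, by simp [IsMatchingIn], rfl⟩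

end

section
variable {V : Type*} [DecidableEq V]

def edgeSupport (F : Finset (Sym2 V)) : Finset V :=
  F.biUnion Sym2.toFinset

@[simp]
lemma mem_edgeSupport {F : Finset (Sym2 V)} {v : V} : v ∈ edgeSupport F ↔ ∃ e ∈ F, v ∈ e := by
  simp [edgeSupport, Sym2.mem_toFinset]

lemma card_edgeSupport_le (F : Finset (Sym2 V)) : #(edgeSupport F) ≤ 2 * #F := by
  calc #(edgeSupport F) ≤ ∑ e ∈ F, #e.toFinset := card_biUnion_le
    _ ≤ ∑ _e ∈ F, 2 := sum_le_sum fun e _ => by rw [Sym2.card_toFinset]; split_ifs <;> omega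
    _ = 2 * #F := by rw [sum_const, smul_eq_mul, mul_comm]

lemma card_edgeSupport_le_card_add_card {F M : Finset (Sym2 V)} (hMF : M ⊆ F)
    (hmeet : ∀ f ∈ F, ∃ v ∈ f, v ∈ edgeSupport M) : #(edgeSupport F) ≤ #F + #M := by
  have hcharge : ∀ w ∈ edgeSupport F \ edgeSupport M, ∃ f ∈ F \ M, w ∈ f := by
    intro w hw
    rw [mem_sdiff, mem_edgeSupport] at hw
    obtain ⟨⟨f, hf, hwf⟩, hwM⟩ := hw
    exact ⟨f, mem_sdiff.2 ⟨hf, fun hfM => hwM (mem_edgeSupport.2 ⟨f, hfM, hwf⟩)⟩, hwf⟩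
  have hsubsingleton : ∀ f ∈ F \ M,
      ({w ∈ edgeSupport F \ edgeSupport M | w ∈ f} : Set V).Subsingleton := by
    rintro f hf w₁ ⟨hw₁, hw₁f⟩ w₂ ⟨hw₂, hw₂f⟩
    by_contra hne
    -- two uncovered endpoints would leave no room for the covered vertex that `f` meets
    obtain ⟨v, hv, hvM⟩ := hmeet f (mem_sdiff.1 hf).1
    rw [(Sym2.mem_and_mem_iff hne).1 ⟨hw₁f, hw₂f⟩, Sym2.mem_iff] at hv
    rcases hv with rfl | rfl
    · exact (mem_sdiff.1 hw₁).2 hvM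
    · exact (mem_sdiff.1 hw₂).2 hvM
  calc #(edgeSupport F) ≤ #(edgeSupport F \ edgeSupport M) + #(edgeSupport M) :=
        card_le_card_sdiff_add_card
    _ ≤ #(F \ M) + 2 * #M :=
        add_le_add (card_le_card_of_forall_subsingleton _ hcharge hsubsingleton)
          (card_edgeSupport_le M)
    _ = #F + #M := by rw [card_sdiff_of_subset hMF]; have := card_le_card hMF; omega

lemma IsMatchingIn.insert {G : SimpleGraph V} {M : Finset (Sym2 V)} {f : Sym2 V}
    (hM : IsMatchingIn G M) (hf : f ∈ G.edgeSet) (hfree : ∀ v ∈ f, v ∉ edgeSupport M) :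
    IsMatchingIn G (insert f M) := by
  refine ⟨by simpa [Set.insert_subset_iff] using ⟨hf, hM.1⟩, ?_⟩
  intro a ha b hb hab v ⟨hva, hvb⟩
  rcases mem_insert.1 ha with rfl | haM <;> rcases mem_insert.1 hb with rfl | hbM
  · exact hab rfl
  · exact hfree v hva (mem_edgeSupport.2 ⟨b, hbM, hvb⟩)
  · exact hfree v hvb (mem_edgeSupport.2 ⟨a, haM, hva⟩)
  · exact hM.2 a haM b hbM hab v ⟨hva, hvb⟩

lemma exists_isMatchingIn_subset_forall_meets {G : SimpleGraph V} {F : Finset (Sym2 V)}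
    (hF : ↑F ⊆ G.edgeSet) :
    ∃ M ⊆ F, IsMatchingIn G M ∧ ∀ f ∈ F, ∃ v ∈ f, v ∈ edgeSupport M := by
  classical
  obtain ⟨M, hM, hmax⟩ := exists_max_image (F.powerset.filter (IsMatchingIn G)) card
    ⟨∅, mem_filter.2 ⟨empty_mem_powerset F, by simp [IsMatchingIn]⟩⟩
  obtain ⟨hMF, hMmatch⟩ := mem_filter.1 hM
  refine ⟨M, mem_powerset.1 hMF, hMmatch, fun f hf => ?_⟩
  by_contra! hfree
  have hfM : f ∉ M := fun hfM =>
    hfree _ f.out_fst_mem (mem_edgeSupport.2 ⟨f, hfM, f.out_fst_mem⟩)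
  have hlarger := hmax (insert f M) <| mem_filter.2
    ⟨mem_powerset.2 (insert_subset hf (mem_powerset.1 hMF)), hMmatch.insert (hF hf) hfree⟩
  rw [card_insert_of_notMem hfM] at hlarger
  omega

variable [Fintype V]

lemma oddCount_le_card_edgeSupport (F : Finset (Sym2 V)) : oddCount F ≤ #(edgeSupport F) := by
  refine card_le_card fun v hv => ?_
  obtain ⟨e, he⟩ : (F.filter fun e => v ∈ e).Nonempty := by
    rw [← card_pos]
    have := (mem_filter.1 hv).2
    omega
  exact mem_edgeSupport.2 ⟨e, mem_filter.1 he⟩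

lemma oddCount_le_card (F : Finset (Sym2 V)) : oddCount F ≤ Fintype.card V :=
  card_le_univ _

lemma IsMatchingIn.two_mul_card_le_oddCount {G : SimpleGraph V} {M : Finset (Sym2 V)}
    (hM : IsMatchingIn G M) : 2 * #M ≤ oddCount M := by
  have hdisj : (M : Set (Sym2 V)).PairwiseDisjoint Sym2.toFinset := by
    intro e he f hf hef
    refine disjoint_left.2 fun v hve hvf => ?_
    exact hM.2 e he f hf hef v ⟨Sym2.mem_toFinset.1 hve, Sym2.mem_toFinset.1 hvf⟩
  have hsupport : #(edgeSupport M) = 2 * #M := by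
    rw [edgeSupport, card_biUnion hdisj,
      sum_congr rfl fun e he => Sym2.card_toFinset_of_not_isDiag e
        (G.not_isDiag_of_mem_edgeSet (hM.1 he)),
      sum_const, smul_eq_mul, mul_comm]
  have hdeg : ∀ v ∈ edgeSupport M, #(M.filter fun e => v ∈ e) = 1 := by
    intro v hv
    obtain ⟨e, he, hve⟩ := mem_edgeSupport.1 hv
    refine le_antisymm (card_le_one.2 fun a ha b hb => ?_)
      (card_pos.2 ⟨e, mem_filter.2 ⟨he, hve⟩⟩)
    rw [mem_filter] at ha hb
    by_contra hab
    exact hM.2 a ha.1 b hb.1 hab v ⟨ha.2, hb.2⟩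
  rw [← hsupport]
  exact card_le_card fun v hv => mem_filter.2 ⟨mem_univ v, by rw [hdeg v hv]⟩

lemma oddCount_le_card_add_matchingNumber {G : SimpleGraph V} {F : Finset (Sym2 V)}
    (hF : ↑F ⊆ G.edgeSet) : oddCount F ≤ #F + matchingNumber G := by
  obtain ⟨M, hMF, hM, hmeet⟩ := exists_isMatchingIn_subset_forall_meets hF
  calc oddCount F ≤ #(edgeSupport F) := oddCount_le_card_edgeSupport F
    _ ≤ #F + #M := card_edgeSupport_le_card_add_card hMF hmeet
    _ ≤ #F + matchingNumber G := Nat.add_le_add_left hM.card_le_matchingNumber _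

end

/-- For a finite simple graph `G` with vertex set `V` and edge set `E`,
the minimum over all `F ⊆ E` of the cost `|F| + (|V| − o(F))`, where `o(F)` is the number
of odd-degree vertices of `(V, F)`, equals `|V| − ν(G)`. -/
theorem stmt6 {V : Type*} [Fintype V] [DecidableEq V] (G : SimpleGraph V) :
    sInf {c : ℕ | ∃ F : Finset (Sym2 V), ↑F ⊆ G.edgeSet ∧
        c = F.card + (Fintype.card V - oddCount F)} =
      Fintype.card V - matchingNumber G := by
  obtain ⟨M, hM, hMcard⟩ := exists_isMatchingIn_card_eq_matchingNumber G
  have hMcost : M.card + (Fintype.card V - oddCount M) ≤ Fintype.card V - matchingNumber G := by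
    have := hM.two_mul_card_le_oddCount
    have := oddCount_le_card M
    omega
  apply le_antisymm
  · refine (Nat.sInf_le ?_).trans hMcost
    exact ⟨M, hM.1, rfl⟩
  · refine le_csInf ⟨_, M, hM.1, rfl⟩ ?_
    rintro c ⟨F, hF, rfl⟩
    have := oddCount_le_card_add_matchingNumber hF
    omega
end

section
/- Let a > 0, r₀ > 0, and α > 2 be reals, and let X ⊆ ℝ² be a set of points whose pairwise distances are all at least a. Then for every x₀ ∈ X, the sum ∑_{x∈X, x≠x₀} (1 + dist(x, x₀)/r₀)^{−α} converges and is at most 24·ζ(α−1)·(r₀/a)^α, where ζ is the Riemann zeta function. -/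
/-- The Riemann zeta function for real argument `s`, `ζ(s) = ∑_{n ≥ 1} n^{−s}`. -/
noncomputable def zetaReal (s : ℝ) : ℝ := ∑' n : ℕ, ((n : ℝ) + 1) ^ (-s)

open Metric MeasureTheory Finset
open scoped ENNReal

local notation "E2" => EuclideanSpace ℝ (Fin 2)

lemma pack_card (a : ℝ) (ha : 0 < a) (x₀ : E2) (n : ℕ) (hn : 1 ≤ n)
    (s : Finset E2)
    (hsep : ∀ x ∈ s, ∀ y ∈ s, x ≠ y → a ≤ dist x y)
    (hmem : ∀ x ∈ s, (n : ℝ) * a ≤ dist x x₀ ∧ dist x x₀ < ((n : ℝ) + 1) * a) :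
    (s.card : ℝ) ≤ 24 * n := by
  have hn' : (1 : ℝ) ≤ (n : ℝ) := by exact_mod_cast hn
  set v : ℝ≥0∞ := volume (ball (0 : E2) 1) with hv
  have hv0 : v ≠ 0 := (measure_ball_pos _ _ one_pos).ne'
  have hvt : v ≠ ⊤ := measure_ball_lt_top.ne
  have hfr : Module.finrank ℝ E2 = 2 := finrank_euclideanSpace_fin
  set R : ℝ := ((n : ℝ) + 3/2) * a with hR
  set r : ℝ := ((n : ℝ) - 1/2) * a with hr
  have hr0 : 0 ≤ r := by nlinarith
  have hR0 : 0 ≤ R := by nlinarith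
  -- disjointness of the small balls
  have hdisj : (↑s : Set E2).PairwiseDisjoint (fun x => ball x (a / 2)) := by
    intro x hx y hy hxy
    exact ball_disjoint_ball (by linarith [hsep x hx y hy hxy])
  -- union of small balls
  set U : Set E2 := ⋃ x ∈ s, ball x (a / 2) with hU
  have hUvol : volume U = (s.card : ℝ≥0∞) * (ENNReal.ofReal ((a / 2) ^ 2) * v) := by
    rw [hU, measure_biUnion_finset hdisj (fun x _ => measurableSet_ball)]
    rw [Finset.sum_congr rfl (fun x _ => ?_), Finset.sum_const, nsmul_eq_mul]
    rw [Measure.addHaar_ball volume x (by positivity : (0:ℝ) ≤ a / 2), hfr]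
  -- the union avoids the small ball around x₀
  have hUdisj : Disjoint U (ball x₀ r) := by
    rw [Set.disjoint_left]
    rintro y hyU hyr
    simp only [hU, Set.mem_iUnion] at hyU
    obtain ⟨x, hx, hyx⟩ := hyU
    rw [mem_ball] at hyx hyr
    have h1 := (hmem x hx).1
    have htri := dist_triangle x y x₀
    have hxy : dist x y < a / 2 := by rw [dist_comm]; exact hyx
    nlinarith
  -- the union sits inside the big ball
  have hUsub : U ∪ ball x₀ r ⊆ ball x₀ R := by
    apply Set.union_subset
    · intro y hyU
      simp only [hU, Set.mem_iUnion] at hyU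
      obtain ⟨x, hx, hyx⟩ := hyU
      rw [mem_ball] at hyx ⊢
      have h2 := (hmem x hx).2
      have := dist_triangle y x x₀
      nlinarith
    · exact ball_subset_ball (by nlinarith)
  have hU_meas : MeasurableSet U := (Finset.measurableSet_biUnion _ fun x _ => measurableSet_ball)
  have key : volume U + volume (ball x₀ r) ≤ volume (ball x₀ R) := by
    rw [← measure_union hUdisj measurableSet_ball]
    exact measure_mono hUsub
  rw [hUvol, Measure.addHaar_ball volume x₀ hr0, Measure.addHaar_ball volume x₀ hR0, hfr] at key
  rw [← mul_assoc, ← add_mul] at key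
  rw [ENNReal.mul_le_mul_iff_left hv0 hvt] at key
  have hcast : ((s.card : ℝ≥0∞) : ℝ≥0∞) * ENNReal.ofReal ((a/2)^2) + ENNReal.ofReal (r^2)
      = ENNReal.ofReal ((s.card : ℝ) * (a/2)^2 + r^2) := by
    rw [ENNReal.ofReal_add (by positivity) (by positivity), ENNReal.ofReal_mul (by positivity)]
    simp
  rw [hcast] at key
  have key2 : (s.card : ℝ) * (a/2)^2 + r^2 ≤ R^2 :=
    (ENNReal.ofReal_le_ofReal_iff (by positivity)).1 key
  nlinarith [sq_nonneg a, mul_pos ha ha]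

theorem stmt12_aux (a r₀ α : ℝ) (ha : 0 < a) (hr₀ : 0 < r₀) (hα : 2 < α)
    (X : Set (EuclideanSpace ℝ (Fin 2)))
    (hsep : ∀ x ∈ X, ∀ y ∈ X, x ≠ y → a ≤ dist x y)
    (x₀ : EuclideanSpace ℝ (Fin 2)) (hx₀ : x₀ ∈ X)
    (u : Finset ↥(X \ {x₀})) :
    ∑ x ∈ u, (1 + dist (x : EuclideanSpace ℝ (Fin 2)) x₀ / r₀) ^ (-α) ≤
      24 * (∑' n : ℕ, ((n : ℝ) + 1) ^ (-(α - 1))) * (r₀ / a) ^ α := by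
  classical
  set s : ℝ := α - 1 with hs
  have hs1 : 1 < s := by linarith
  have hzsum : Summable (fun n : ℕ => ((n : ℝ) + 1) ^ (-s)) := by
    have h0 : Summable (fun n : ℕ => (n : ℝ) ^ (-s)) := Real.summable_nat_rpow.2 (by linarith)
    have := h0.comp_injective (add_left_injective 1)
    refine this.congr fun n => ?_
    simp [Function.comp]
  -- basic facts about points of X \ {x₀}
  have hmemX : ∀ x : ↥(X \ {x₀}), (x : E2) ∈ X := fun x => x.2.1
  have hne : ∀ x : ↥(X \ {x₀}), (x : E2) ≠ x₀ := fun x => x.2.2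
  have hd : ∀ x : ↥(X \ {x₀}), a ≤ dist (x : E2) x₀ :=
    fun x => hsep _ (hmemX x) _ hx₀ (hne x)
  set g : ↥(X \ {x₀}) → ℕ := fun x => ⌊dist (x : E2) x₀ / a⌋₊ with hg
  have hg1 : ∀ x : ↥(X \ {x₀}), 1 ≤ g x := by
    intro x
    rw [hg]
    exact Nat.le_floor (by rw [Nat.cast_one, le_div_iff₀ ha, one_mul]; exact hd x)
  have hlow : ∀ x : ↥(X \ {x₀}), (g x : ℝ) * a ≤ dist (x : E2) x₀ := by
    intro x
    have := Nat.floor_le (by positivity : (0:ℝ) ≤ dist (x : E2) x₀ / a)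
    rw [← le_div_iff₀ ha]
    exact this
  have hhigh : ∀ x : ↥(X \ {x₀}), dist (x : E2) x₀ < ((g x : ℝ) + 1) * a := by
    intro x
    have := Nat.lt_floor_add_one (dist (x : E2) x₀ / a)
    rw [← div_lt_iff₀ ha]
    exact this
  -- pointwise bound
  have hpt : ∀ x : ↥(X \ {x₀}),
      (1 + dist (x : E2) x₀ / r₀) ^ (-α) ≤ (r₀ / a) ^ α * (g x : ℝ) ^ (-α) := by
    intro x
    have hgx : (0:ℝ) < (g x : ℝ) := by exact_mod_cast hg1 x
    have hb0 : (0:ℝ) < (g x : ℝ) * a / r₀ := by positivity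
    have hble : (g x : ℝ) * a / r₀ ≤ 1 + dist (x : E2) x₀ / r₀ := by
      have := hlow x
      have h1 : (g x : ℝ) * a / r₀ ≤ dist (x : E2) x₀ / r₀ := by gcongr
      linarith [div_nonneg (dist_nonneg : (0:ℝ) ≤ dist (x : E2) x₀) hr₀.le]
    calc (1 + dist (x : E2) x₀ / r₀) ^ (-α)
        ≤ ((g x : ℝ) * a / r₀) ^ (-α) :=
          Real.rpow_le_rpow_of_nonpos hb0 hble (by linarith)
      _ = (r₀ / a) ^ α * (g x : ℝ) ^ (-α) := by
          rw [Real.rpow_neg hb0.le, ← Real.inv_rpow hb0.le, Real.rpow_neg hgx.le,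
            ← Real.inv_rpow hgx.le, ← Real.mul_rpow (by positivity) (by positivity)]
          congr 1
          field_simp
  -- group by annuli
  set T : Finset ℕ := u.image g with hT
  have hsum1 : ∑ x ∈ u, (1 + dist (x : E2) x₀ / r₀) ^ (-α)
      ≤ (r₀ / a) ^ α * ∑ x ∈ u, (g x : ℝ) ^ (-α) := by
    rw [Finset.mul_sum]
    exact Finset.sum_le_sum fun x _ => hpt x
  have hfiber : ∑ x ∈ u, (g x : ℝ) ^ (-α)
      = ∑ n ∈ T, ∑ x ∈ u.filter (fun x => g x = n), (g x : ℝ) ^ (-α) :=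
    (Finset.sum_fiberwise_of_maps_to (fun x hx => Finset.mem_image_of_mem g hx) _).symm
  -- cardinality of each fiber
  have hcard : ∀ n ∈ T, ((u.filter (fun x => g x = n)).card : ℝ) ≤ 24 * n := by
    intro n hnT
    obtain ⟨x₁, _, hgx₁⟩ := Finset.mem_image.1 hnT
    have hn1 : 1 ≤ n := hgx₁ ▸ hg1 x₁
    set s' : Finset E2 := (u.filter (fun x => g x = n)).image (Subtype.val) with hs'
    have hcardeq : s'.card = (u.filter (fun x => g x = n)).card :=
      Finset.card_image_of_injective _ Subtype.val_injective
    rw [← hcardeq]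
    apply pack_card a ha x₀ n hn1 s'
    · intro x hx y hy hxy
      simp only [hs', Finset.mem_image] at hx hy
      obtain ⟨x', _, rfl⟩ := hx
      obtain ⟨y', _, rfl⟩ := hy
      exact hsep _ (hmemX x') _ (hmemX y') hxy
    · intro x hx
      simp only [hs', Finset.mem_image] at hx
      obtain ⟨x', hx', rfl⟩ := hx
      have hgx' : g x' = n := (Finset.mem_filter.1 hx').2
      exact ⟨hgx' ▸ hlow x', hgx' ▸ hhigh x'⟩
  -- bound each fiber sum
  have hfib_le : ∀ n ∈ T, ∑ x ∈ u.filter (fun x => g x = n), (g x : ℝ) ^ (-α)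
      ≤ 24 * (n : ℝ) ^ (-s) := by
    intro n hnT
    obtain ⟨x₁, _, hgx₁⟩ := Finset.mem_image.1 hnT
    have hn1 : 1 ≤ n := hgx₁ ▸ hg1 x₁
    have hn0 : (0:ℝ) < (n : ℝ) := by exact_mod_cast hn1
    have heach : ∀ x ∈ u.filter (fun x => g x = n), (g x : ℝ) ^ (-α) = (n : ℝ) ^ (-α) := by
      intro x hx
      rw [(Finset.mem_filter.1 hx).2]
    rw [Finset.sum_congr rfl heach, Finset.sum_const, nsmul_eq_mul]
    have : (n : ℝ) ^ (-s) = (n:ℝ) * (n : ℝ) ^ (-α) := by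
      rw [hs, show -(α-1) = 1 + (-α) by ring, Real.rpow_add hn0, Real.rpow_one]
    rw [this, ← mul_assoc]
    apply mul_le_mul_of_nonneg_right _ (Real.rpow_nonneg hn0.le _)
    exact hcard n hnT
  have hsum2 : ∑ n ∈ T, ∑ x ∈ u.filter (fun x => g x = n), (g x : ℝ) ^ (-α)
      ≤ 24 * ∑ n ∈ T, (n : ℝ) ^ (-s) := by
    rw [Finset.mul_sum]
    exact Finset.sum_le_sum fun n hn => hfib_le n hn
  -- compare with zeta
  have hT1 : ∀ n ∈ T, 1 ≤ n := by
    intro n hnT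
    obtain ⟨x₁, _, hgx₁⟩ := Finset.mem_image.1 hnT
    exact hgx₁ ▸ hg1 x₁
  have hzeta : ∑ n ∈ T, (n : ℝ) ^ (-s) ≤ ∑' n : ℕ, ((n : ℝ) + 1) ^ (-s) := by
    have hinj : Set.InjOn (fun n : ℕ => n - 1) ↑T := by
      intro m hm k hk h
      have hm1 := hT1 m hm
      have hk1 := hT1 k hk
      dsimp at h
      omega
    have : ∑ n ∈ T, (n : ℝ) ^ (-s)
        = ∑ m ∈ T.image (fun n : ℕ => n - 1), ((m : ℝ) + 1) ^ (-s) := by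
      rw [Finset.sum_image hinj]
      refine Finset.sum_congr rfl fun n hn => ?_
      have h1 := hT1 n hn
      have h2 : ((n - 1 : ℕ) : ℝ) + 1 = (n : ℝ) := by
        have h3 : n - 1 + 1 = n := by omega
        exact_mod_cast congrArg (Nat.cast (R := ℝ)) h3
      rw [h2]
    rw [this]
    exact Summable.sum_le_tsum _ (fun m _ => Real.rpow_nonneg (by positivity) _) hzsum
  -- combine
  have hnn : (0:ℝ) ≤ (r₀ / a) ^ α := Real.rpow_nonneg (by positivity) _
  calc ∑ x ∈ u, (1 + dist (x : E2) x₀ / r₀) ^ (-α)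
      ≤ (r₀ / a) ^ α * ∑ x ∈ u, (g x : ℝ) ^ (-α) := hsum1
    _ ≤ (r₀ / a) ^ α * (24 * ∑ n ∈ T, (n : ℝ) ^ (-s)) := by
        rw [hfiber]
        exact mul_le_mul_of_nonneg_left hsum2 hnn
    _ ≤ (r₀ / a) ^ α * (24 * ∑' n : ℕ, ((n : ℝ) + 1) ^ (-s)) := by
        apply mul_le_mul_of_nonneg_left _ hnn
        exact mul_le_mul_of_nonneg_left hzeta (by norm_num)
    _ = 24 * (∑' n : ℕ, ((n : ℝ) + 1) ^ (-s)) * (r₀ / a) ^ α := by ring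

/-- Let `a > 0`, `r₀ > 0`, `α > 2`, and let `X ⊆ ℝ²` have pairwise
distances at least `a`. Then for every `x₀ ∈ X`, the sum
`∑_{x ∈ X, x ≠ x₀} (1 + dist(x, x₀)/r₀)^{−α}` converges and is at most
`24 ζ(α−1) (r₀/a)^α`. -/
theorem stmt12 (a r₀ α : ℝ) (ha : 0 < a) (hr₀ : 0 < r₀) (hα : 2 < α)
    (X : Set (EuclideanSpace ℝ (Fin 2)))
    (hsep : ∀ x ∈ X, ∀ y ∈ X, x ≠ y → a ≤ dist x y)
    (x₀ : EuclideanSpace ℝ (Fin 2)) (hx₀ : x₀ ∈ X) :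
    Summable (fun x : ↥(X \ {x₀}) =>
        (1 + dist (x : EuclideanSpace ℝ (Fin 2)) x₀ / r₀) ^ (-α)) ∧
      ∑' x : ↥(X \ {x₀}), (1 + dist (x : EuclideanSpace ℝ (Fin 2)) x₀ / r₀) ^ (-α) ≤
        24 * zetaReal (α - 1) * (r₀ / a) ^ α := by
  have hnonneg : 0 ≤ (fun x : ↥(X \ {x₀}) =>
      (1 + dist (x : EuclideanSpace ℝ (Fin 2)) x₀ / r₀) ^ (-α)) := by
    intro x
    positivity
  have key : ∀ u : Finset ↥(X \ {x₀}),
      ∑ x ∈ u, (1 + dist (x : EuclideanSpace ℝ (Fin 2)) x₀ / r₀) ^ (-α) ≤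
        24 * zetaReal (α - 1) * (r₀ / a) ^ α := by
    intro u
    rw [zetaReal]
    exact stmt12_aux a r₀ α ha hr₀ hα X hsep x₀ hx₀ u
  have hsummable := summable_of_sum_le hnonneg key
  exact ⟨hsummable, Summable.tsum_le_of_sum_le hsummable key⟩
end
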